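/- arXiv:1309.0931 — 8 statements merged into one kernel-verified Lean document; each statement's English description precedes it below -/
import Mathlib

section
/- With f convex and φ a φ-regular function, the regularization f_φ(x) = min_{z ∈ ℝⁿ} [f(z) + (1/λ)φ(z,x)] is a convex function of x. -/
/-!
Dropping the nonnegative term `β‖(z' - z) - (x' - x)‖²` from the strong-convexity inequality of
`φ` leaves an affine minorant of `φ` at every point of `ℝⁿ × ℝⁿ`, so `φ` is jointly convex in
`(z, x)`. Hence `(z, x) ↦ f z + φ z x / λ` is jointly convex, and minimizing a jointly convex
function over `z` preserves convexity in `x`: the minimum at a convex combination of `x, y` is at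
most the value at the same combination of the minimizers for `x` and `y`.
-/

open Set Filter Topology RealInnerProductSpace

/-- A φ-regular function on ℝⁿ, together with its partial gradients `Dz`, `Dx`,
strong-convexity modulus `β` and Lipschitz constant `L` for `∇φ`. -/
structure PhiRegular (n : ℕ) where
  φ : EuclideanSpace ℝ (Fin n) → EuclideanSpace ℝ (Fin n) → ℝ
  Dz : EuclideanSpace ℝ (Fin n) → EuclideanSpace ℝ (Fin n) → EuclideanSpace ℝ (Fin n)
  Dx : EuclideanSpace ℝ (Fin n) → EuclideanSpace ℝ (Fin n) → EuclideanSpace ℝ (Fin n)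
  β : ℝ
  L : ℝ
  β_pos : 0 < β
  L_pos : 0 < L
  contDiff : ContDiff ℝ 1 (fun p : EuclideanSpace ℝ (Fin n) × EuclideanSpace ℝ (Fin n) => φ p.1 p.2)
  gradZ : ∀ z x, HasGradientAt (fun z' => φ z' x) (Dz z x) z
  gradX : ∀ z x, HasGradientAt (fun x' => φ z x') (Dx z x) x
  nonneg : ∀ z x, 0 ≤ φ z x
  eq_zero_iff : ∀ z x, φ z x = 0 ↔ z = x
  strong : ∀ z' z x' x, φ z x + ⟪Dz z x, z' - z⟫ + ⟪Dx z x, x' - x⟫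
      + β * ‖(z' - z) - (x' - x)‖ ^ 2 ≤ φ z' x'
  lip : ∀ z' z x' x, ‖Dz z' x' - Dz z x‖ ^ 2 + ‖Dx z' x' - Dx z x‖ ^ 2
      ≤ L ^ 2 * ‖(z' - z) - (x' - x)‖ ^ 2
  skew : ∀ z x, Dz z x = - Dx z x

section Convexity

variable {E X : Type*} [AddCommGroup E] [Module ℝ E] [AddCommGroup X] [Module ℝ X]

theorem convexOn_univ_of_linear_minorant {g : E → ℝ} (ℓ : E → Module.Dual ℝ E)
    (hℓ : ∀ x y, g x + ℓ x (y - x) ≤ g y) : ConvexOn ℝ univ g := by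
  refine ⟨convex_univ, fun x _ y _ a b ha hb hab => ?_⟩
  set m := a • x + b • y
  have hbalance : a • (x - m) + b • (y - m) = 0 := by
    linear_combination (norm := module) -(hab • m)
  have hℓm : a * ℓ m (x - m) + b * ℓ m (y - m) = 0 := by
    rw [← smul_eq_mul, ← smul_eq_mul, ← map_smul, ← map_smul, ← map_add, hbalance, map_zero]
  have hgm : g m = a * g m + b * g m := by rw [← add_mul, hab, one_mul]
  simp only [smul_eq_mul]
  nlinarith [mul_le_mul_of_nonneg_left (hℓ m x) ha, mul_le_mul_of_nonneg_left (hℓ m y) hb]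

theorem ConvexOn.convexOn_of_isMinOn_fiber {F : E × X → ℝ} (hF : ConvexOn ℝ univ F)
    {p : X → E} (hp : ∀ x, IsMinOn (fun z => F (z, x)) univ (p x)) :
    ConvexOn ℝ univ fun x => F (p x, x) := by
  refine ⟨convex_univ, fun x _ y _ a b ha hb hab => ?_⟩
  calc F (p (a • x + b • y), a • x + b • y)
      ≤ F (a • p x + b • p y, a • x + b • y) := hp _ (mem_univ _)
    _ = F (a • (p x, x) + b • (p y, y)) := by simp
    _ ≤ a • F (p x, x) + b • F (p y, y) := hF.2 (mem_univ _) (mem_univ _) ha hb hab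

end Convexity

theorem PhiRegular.convexOn_uncurry {n : ℕ} (R : PhiRegular n) :
    ConvexOn ℝ univ fun q : EuclideanSpace ℝ (Fin n) × EuclideanSpace ℝ (Fin n) =>
      R.φ q.1 q.2 := by
  refine convexOn_univ_of_linear_minorant
    (fun q => (innerSL ℝ (R.Dz q.1 q.2) : _ →ₗ[ℝ] ℝ) ∘ₗ LinearMap.fst ℝ _ _ +
      (innerSL ℝ (R.Dx q.1 q.2) : _ →ₗ[ℝ] ℝ) ∘ₗ LinearMap.snd ℝ _ _) fun q q' => ?_
  have hstrong := R.strong q'.1 q.1 q'.2 q.2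
  have hquad : 0 ≤ R.β * ‖(q'.1 - q.1) - (q'.2 - q.2)‖ ^ 2 :=
    mul_nonneg R.β_pos.le (sq_nonneg _)
  simp only [ContinuousLinearMap.toLinearMap_innerSL_apply, LinearMap.add_apply,
    LinearMap.coe_comp, coe_innerₛₗ_apply, LinearMap.coe_fst, Function.comp_apply,
    Prod.fst_sub, LinearMap.coe_snd, Prod.snd_sub]
  linarith

/-- the regularization `f_φ(x) = min_z [f z + (1/λ) φ z x]` is convex. -/
theorem phi_regularization_convex (n : ℕ) (R : PhiRegular n)
    (f : EuclideanSpace ℝ (Fin n) → ℝ) (hf : ConvexOn ℝ univ f)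
    (lam : ℝ) (hlam : 0 < lam)
    (p : EuclideanSpace ℝ (Fin n) → EuclideanSpace ℝ (Fin n))
    (fphi : EuclideanSpace ℝ (Fin n) → ℝ)
    (hfphi : ∀ x, fphi x = f (p x) + (1 / lam) * R.φ (p x) x)
    (hmin : ∀ x z, fphi x ≤ f z + (1 / lam) * R.φ z x) :
    ConvexOn ℝ univ fphi := by
  set F : EuclideanSpace ℝ (Fin n) × EuclideanSpace ℝ (Fin n) → ℝ :=
    fun q => f q.1 + (1 / lam) * R.φ q.1 q.2
  have hF : ConvexOn ℝ univ F :=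
    (hf.comp_linearMap (LinearMap.fst ℝ _ _)).add
      (R.convexOn_uncurry.smul (one_div_pos.2 hlam).le)
  have hfphi_eq : fphi = fun x => F (p x, x) := funext hfphi
  rw [hfphi_eq]
  exact hF.convexOn_of_isMinOn_fiber fun x z _ => (hfphi x).symm.trans_le (hmin x z)
end

section
/- The regularization f_φ is everywhere differentiable with gradient ∇f_φ(x) = (1/λ)∇_x φ(p(x), x), where p(x) is the unique minimizer of z ↦ f(z) + (1/λ)φ(z,x). -/
/-!
Comparing `f_φ y` with the objective at `y` evaluated at `p x` bounds `f_φ y - f_φ x` above by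
`(φ (p x) y - φ (p x) x) / λ`, which has gradient `∇ₓφ (p x) x / λ` at `x`. Comparing `f_φ x` with
the objective at `x` evaluated at `p y`, convexity of `φ (p y) ·` bounds it below by
`⟪∇ₓφ (p y) x, y - x⟫ / λ`, and `∇ₓφ (p y) x → ∇ₓφ (p x) x` because `p` is Lipschitz: the
objectives are `2β/λ`-strongly convex, so each grows quadratically away from its minimizer, and
adding these growth estimates at `x` and `y` leaves a difference of values of `φ` that the
Lipschitz bound `L` on `∇φ` controls.
-/

open Set Filter Topology RealInnerProductSpace

section StrongConvexity

variable {E : Type*} [NormedAddCommGroup E] [InnerProductSpace ℝ E] {s : Set E} {m : ℝ}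
  {F : E → ℝ}

lemma StrongConvexOn.const_mul {c : ℝ} (hc : 0 ≤ c) (hF : StrongConvexOn s m F) :
    StrongConvexOn s (c * m) fun z => c * F z := by
  refine ⟨hF.1, fun u hu v hv a b ha hb hab => ?_⟩
  have h := mul_le_mul_of_nonneg_left (hF.2 hu hv ha hb hab) hc
  simp only [smul_eq_mul] at h ⊢
  linear_combination h

lemma ConvexOn.add_strongConvexOn {f : E → ℝ} (hf : ConvexOn ℝ s f)
    (hF : StrongConvexOn s m F) : StrongConvexOn s m (f + F) := by
  have h := (uniformConvexOn_zero.2 hf).add hF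
  rwa [zero_add] at h

lemma strongConvexOn_of_forall_add_inner_le (hs : Convex ℝ s) {D : E → E}
    (hD : ∀ z ∈ s, ∀ z' ∈ s, F z + ⟪D z, z' - z⟫ + m / 2 * ‖z' - z‖ ^ 2 ≤ F z') :
    StrongConvexOn s m F := by
  refine ⟨hs, fun u hu v hv a b ha hb hab => ?_⟩
  set w := a • u + b • v
  have hw : w ∈ s := hs hu hv ha hb hab
  obtain rfl : a = 1 - b := by linarith
  have hu' : u - w = b • (u - v) := by module
  have hv' : v - w = -((1 - b) • (u - v)) := by module
  have h₁ := hD w hw u hu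
  have h₂ := hD w hw v hv
  rw [hu', real_inner_smul_right, norm_smul, Real.norm_of_nonneg hb] at h₁
  rw [hv', inner_neg_right, real_inner_smul_right, norm_neg, norm_smul,
    Real.norm_of_nonneg ha] at h₂
  simp only [smul_eq_mul]
  linear_combination (1 - b) * h₁ + b * h₂

lemma StrongConvexOn.add_sq_le_of_isMinOn {a b : E} (hF : StrongConvexOn s m F) (ha : a ∈ s)
    (hb : b ∈ s) (hmin : IsMinOn F s a) : F a + m / 4 * ‖b - a‖ ^ 2 ≤ F b := by
  have hhalf : (0 : ℝ) ≤ 1 / 2 := by norm_num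
  have hmid := hF.2 ha hb hhalf hhalf (by norm_num)
  have hle := isMinOn_iff.1 hmin _ (hF.1 ha hb hhalf hhalf (by norm_num))
  rw [norm_sub_rev]
  simp only [smul_eq_mul] at hmid
  linarith

end StrongConvexity

section Gradient

variable {E : Type*} [NormedAddCommGroup E] [InnerProductSpace ℝ E] [CompleteSpace E]
  {g x : E}

lemma HasGradientAt.const_add_const_mul {u : E → ℝ} (a c : ℝ) (h : HasGradientAt u g x) :
    HasGradientAt (fun y => a + c * u y) (c • g) x := by
  rw [hasGradientAt_iff_hasFDerivAt] at *
  simpa using (h.const_mul c).const_add a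

lemma HasGradientAt.of_squeeze {F U ε : E → ℝ} (hU : HasGradientAt U g x)
    (hFU : ∀ y, F y ≤ U y) (hFx : F x = U x) (hε : Tendsto ε (𝓝 x) (𝓝 0))
    (hlow : ∀ y, F x + ⟪g, y - x⟫ - ε y * ‖y - x‖ ≤ F y) : HasGradientAt F g x := by
  rw [hasGradientAt_iff_isLittleO] at hU ⊢
  have hεo : (fun y => ε y * ‖y - x‖) =o[𝓝 x] fun y => y - x := by
    simpa using ((Asymptotics.isLittleO_one_iff ℝ).2 hε).mul_isBigO
      (Asymptotics.isBigO_refl (fun y => ‖y - x‖) (𝓝 x))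
  refine (Asymptotics.isBigO_of_le _ fun y => ?_).trans_isLittleO (hU.norm_left.add hεo.norm_left)
  refine le_trans ?_ (Real.le_norm_self _)
  rw [Real.norm_eq_abs, abs_le]
  constructor <;> linarith [hFU y, hlow y, Real.le_norm_self (U y - U x - ⟪g, y - x⟫),
    norm_nonneg (U y - U x - ⟪g, y - x⟫), Real.le_norm_self (ε y * ‖y - x‖),
    norm_nonneg (ε y * ‖y - x‖)]

end Gradient

lemma le_mul_of_mul_sq_le {β L t s : ℝ} (hβ : 0 < β) (hL : 0 ≤ L) (hs : 0 ≤ s)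
    (h : β * t ^ 2 ≤ L * (t + s) * s) : t ≤ (1 + 2 * L / β) * s := by
  have hLβ : 0 ≤ 2 * L / β * s := by positivity
  rcases le_or_gt t s with hts | hts
  · linarith
  · have hβt : β * t ≤ 2 * L * s := by
      refine le_of_mul_le_mul_right ?_ (hs.trans_lt hts)
      nlinarith [mul_le_mul_of_nonneg_left hts.le (mul_nonneg hL hs)]
    have : t ≤ 2 * L / β * s := by rw [div_mul_eq_mul_div, le_div_iff₀ hβ]; linarith
    linarith

namespace PhiRegular

variable {n : ℕ} (R : PhiRegular n)

lemma add_inner_Dx_le (z x x' : EuclideanSpace ℝ (Fin n)) :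
    R.φ z x + ⟪R.Dx z x, x' - x⟫ ≤ R.φ z x' := by
  have h := R.strong z z x' x
  simp only [sub_self, inner_zero_right, add_zero, zero_sub, norm_neg] at h
  linarith [mul_nonneg R.β_pos.le (sq_nonneg ‖x' - x‖)]

lemma strongConvexOn_φ (x : EuclideanSpace ℝ (Fin n)) :
    StrongConvexOn univ (2 * R.β) (R.φ · x) :=
  strongConvexOn_of_forall_add_inner_le convex_univ (D := (R.Dz · x)) fun z _ z' _ => by
    have h := R.strong z' z x x
    simp only [sub_self, inner_zero_right, add_zero, sub_zero] at h
    linarith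

lemma norm_Dx_sub_le (z' z x' x : EuclideanSpace ℝ (Fin n)) :
    ‖R.Dx z' x' - R.Dx z x‖ ≤ R.L * ‖(z' - z) - (x' - x)‖ := by
  refine (pow_le_pow_iff_left₀ (norm_nonneg _) (mul_nonneg R.L_pos.le (norm_nonneg _))
    two_ne_zero).1 ?_
  rw [mul_pow]
  linarith [R.lip z' z x' x, sq_nonneg ‖R.Dz z' x' - R.Dz z x‖]

lemma φ_sub_add_φ_sub_le (z z' x x' : EuclideanSpace ℝ (Fin n)) :
    R.φ z' x - R.φ z x + (R.φ z x' - R.φ z' x') ≤ R.L * (‖z' - z‖ + ‖x' - x‖) * ‖x' - x‖ := by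
  have h₁ := R.add_inner_Dx_le z' x x'
  have h₂ := R.add_inner_Dx_le z x' x
  have hcross : ⟪R.Dx z x' - R.Dx z' x, x' - x⟫ ≤ R.L * (‖z' - z‖ + ‖x' - x‖) * ‖x' - x‖ :=
    calc _ ≤ ‖R.Dx z x' - R.Dx z' x‖ * ‖x' - x‖ := real_inner_le_norm _ _
      _ ≤ R.L * ‖(z - z') - (x' - x)‖ * ‖x' - x‖ := by gcongr; exact R.norm_Dx_sub_le ..
      _ ≤ _ := by
        have := R.L_pos.le
        gcongr
        exact (norm_sub_le _ _).trans_eq (by rw [norm_sub_rev])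
  rw [inner_sub_left] at hcross
  rw [← neg_sub x' x, inner_neg_right] at h₂
  linarith

section Minimizer

variable {f : EuclideanSpace ℝ (Fin n) → ℝ} {lam : ℝ}
  {p : EuclideanSpace ℝ (Fin n) → EuclideanSpace ℝ (Fin n)}

lemma β_mul_sq_norm_sub_le_of_isMinimizer (hf : ConvexOn ℝ univ f) (hlam : 0 < lam)
    (hp : ∀ x z, f (p x) + (1 / lam) * R.φ (p x) x ≤ f z + (1 / lam) * R.φ z x)
    (x y : EuclideanSpace ℝ (Fin n)) :
    R.β * ‖p y - p x‖ ^ 2 ≤ R.L * (‖p y - p x‖ + ‖y - x‖) * ‖y - x‖ := by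
  have hc : 0 < 1 / lam := by positivity
  have hconv (x) : StrongConvexOn univ (1 / lam * (2 * R.β)) fun z => f z + 1 / lam * R.φ z x :=
    hf.add_strongConvexOn ((R.strongConvexOn_φ x).const_mul hc.le)
  have hx := (hconv x).add_sq_le_of_isMinOn (mem_univ (p x)) (mem_univ (p y))
    (isMinOn_iff.2 fun z _ => hp x z)
  have hy := (hconv y).add_sq_le_of_isMinOn (mem_univ (p y)) (mem_univ (p x))
    (isMinOn_iff.2 fun z _ => hp y z)
  have hφ := mul_le_mul_of_nonneg_left (R.φ_sub_add_φ_sub_le (p x) (p y) x y) hc.le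
  rw [norm_sub_rev] at hy
  refine le_of_mul_le_mul_left ?_ hc
  linear_combination hx + hy + hφ

lemma lipschitzWith_of_isMinimizer (hf : ConvexOn ℝ univ f) (hlam : 0 < lam)
    (hp : ∀ x z, f (p x) + (1 / lam) * R.φ (p x) x ≤ f z + (1 / lam) * R.φ z x) :
    LipschitzWith (1 + 2 * R.L / R.β).toNNReal p :=
  LipschitzWith.of_dist_le' fun y x => by
    simpa only [dist_eq_norm] using le_mul_of_mul_sq_le R.β_pos R.L_pos.le (norm_nonneg _)
      (R.β_mul_sq_norm_sub_le_of_isMinimizer hf hlam hp x y)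

lemma add_inner_sub_le_of_isMinimizer (hlam : 0 < lam)
    (hp : ∀ x z, f (p x) + (1 / lam) * R.φ (p x) x ≤ f z + (1 / lam) * R.φ z x)
    (x y : EuclideanSpace ℝ (Fin n)) :
    f (p x) + 1 / lam * R.φ (p x) x + ⟪(1 / lam) • R.Dx (p x) x, y - x⟫
        - R.L / lam * ‖p y - p x‖ * ‖y - x‖ ≤ f (p y) + 1 / lam * R.φ (p y) y := by
  have hcross : ⟪R.Dx (p x) x - R.Dx (p y) x, y - x⟫ ≤ R.L * ‖p y - p x‖ * ‖y - x‖ :=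
    calc _ ≤ ‖R.Dx (p x) x - R.Dx (p y) x‖ * ‖y - x‖ := real_inner_le_norm _ _
      _ ≤ _ := by
        gcongr
        simpa [norm_sub_rev (p x)] using R.norm_Dx_sub_le (p x) (p y) x x
  rw [inner_sub_left] at hcross
  have key : R.φ (p y) x + ⟪R.Dx (p x) x, y - x⟫ - R.L * ‖p y - p x‖ * ‖y - x‖
      ≤ R.φ (p y) y := by linarith [R.add_inner_Dx_le (p y) x y]
  rw [real_inner_smul_left]
  linear_combination hp x (p y) + 1 / lam * key

end Minimizer

end PhiRegular

/-- `f_φ` is everywhere differentiable with gradient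
`∇f_φ(x) = (1/λ) ∇_x φ(p(x), x)`. -/
theorem phi_regularization_gradient (n : ℕ) (R : PhiRegular n)
    (f : EuclideanSpace ℝ (Fin n) → ℝ) (hf : ConvexOn ℝ univ f)
    (lam : ℝ) (hlam : 0 < lam)
    (p : EuclideanSpace ℝ (Fin n) → EuclideanSpace ℝ (Fin n))
    (hp : ∀ x z, f (p x) + (1 / lam) * R.φ (p x) x ≤ f z + (1 / lam) * R.φ z x)
    (fphi : EuclideanSpace ℝ (Fin n) → ℝ)
    (hfphi : ∀ x, fphi x = f (p x) + (1 / lam) * R.φ (p x) x) :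
    ∀ x, HasGradientAt fphi ((1 / lam) • R.Dx (p x) x) x := by
  intro x
  have hU : HasGradientAt (fun y => f (p x) + 1 / lam * R.φ (p x) y)
      ((1 / lam) • R.Dx (p x) x) x :=
    (R.gradX (p x) x).const_add_const_mul _ _
  have hε : Tendsto (fun y => R.L / lam * ‖p y - p x‖) (𝓝 x) (𝓝 0) := by
    have hp_cont := (R.lipschitzWith_of_isMinimizer hf hlam hp).continuous.tendsto x
    simpa using (tendsto_iff_norm_sub_tendsto_zero.1 hp_cont).const_mul (R.L / lam)
  refine hU.of_squeeze (fun y => ?_) (hfphi x) hε fun y => ?_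
  · rw [hfphi]
    exact hp y (p x)
  · rw [hfphi, hfphi]
    exact R.add_inner_sub_le_of_isMinimizer hlam hp x y
end

section
/- The gradient mapping ∇f_φ is globally Lipschitz continuous with constant c = L²/(4βλ); more precisely, ‖∇f_φ(x) - ∇f_φ(x')‖² ≤ (L²/(4βλ)) ⟨∇f_φ(x) - ∇f_φ(x'), x - x'⟩ for all x, x' ∈ ℝⁿ. -/
open Set Filter Topology RealInnerProductSpace

/-! The first-order condition at the minimiser `p x`, together with `∇_z φ = -∇ₓφ`, makes
`g x = λ⁻¹ ∇ₓφ(p x, x)` a subgradient of `f` at `p x`, so `⟪g x - g x', p x - p x'⟫ ≥ 0`. Writing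
`a = ∇ₓφ(p x, x)`, `a' = ∇ₓφ(p x', x')` and `w = (p x - p x') - (x - x')`, strong convexity of `φ`
applied in both directions gives `2β‖w‖² ≤ ⟪a - a', x - x'⟫`, while the Lipschitz bound on `∇φ`
gives `2‖a - a'‖² ≤ L²‖w‖²`. Hence `‖a - a'‖² ≤ L²/(4β) ⟪a - a', x - x'⟫`; rescaling by `λ⁻¹`
gives cocoercivity of `g`, and Cauchy–Schwarz turns it into the Lipschitz bound. -/

theorem ConvexOn.le_add_of_isMinOn_add {E : Type*} [NormedAddCommGroup E] [NormedSpace ℝ E]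
    {f h : E → ℝ} {h' : StrongDual ℝ E} {s : Set E} {z y : E} (hf : ConvexOn ℝ s f)
    (hmin : IsMinOn (f + h) s z) (hh : HasFDerivAt h h' z) (hz : z ∈ s) (hy : y ∈ s) :
    f z ≤ f y + h' (y - z) := by
  -- Replacing `f` by its chord on `[z, y]` keeps `t = 0` a minimiser on `[0, 1]`.
  set G : ℝ → ℝ := fun t => (1 - t) * f z + t * f y + h (z + t • (y - z))
  have hG : HasDerivAt G (-1 * f z + 1 * f y + h' (y - z)) 0 := by
    have hline : HasDerivAt (fun t : ℝ => z + t • (y - z)) (y - z) 0 := by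
      simpa using ((hasDerivAt_id (0 : ℝ)).smul_const (y - z)).const_add z
    have hcomp := hh.comp_hasDerivAt_of_eq 0 hline (by simp)
    exact (((hasDerivAt_id (0 : ℝ)).const_sub 1).mul_const (f z)).add
      ((hasDerivAt_id (0 : ℝ)).mul_const (f y)) |>.add hcomp
  have hGmin : IsLocalMinOn G (Icc 0 1) 0 := by
    refine IsMinOn.localize fun t ⟨ht0, ht1⟩ => ?_
    have hmem : z + t • (y - z) ∈ s := hf.1.add_smul_sub_mem hz hy ⟨ht0, ht1⟩
    have hconv : f (z + t • (y - z)) ≤ (1 - t) * f z + t * f y := by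
      have := hf.2 hz hy (sub_nonneg.2 ht1) ht0 (sub_add_cancel 1 t)
      rwa [show (1 - t) • z + t • y = z + t • (y - z) by module] at this
    have hle : f z + h z ≤ f (z + t • (y - z)) + h (z + t • (y - z)) := hmin hmem
    show G 0 ≤ G t
    simp only [G, zero_smul, add_zero, zero_mul, sub_zero, one_mul]
    linarith
  have h1 : (1 : ℝ) ∈ posTangentConeAt (Icc 0 1) 0 :=
    mem_posTangentConeAt_of_segment_subset (by simp [segment_eq_Icc])
  have := hGmin.hasFDerivWithinAt_nonneg hG.hasFDerivAt.hasFDerivWithinAt h1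
  simp only [ContinuousLinearMap.toSpanSingleton_apply, smul_eq_mul, one_mul] at this
  linarith

section InnerProductSpace

variable {E : Type*} [NormedAddCommGroup E] [InnerProductSpace ℝ E]

def IsSubgradientAt (f : E → ℝ) (g x : E) : Prop :=
  ∀ y, f x + ⟪g, y - x⟫ ≤ f y

theorem IsSubgradientAt.inner_sub_nonneg {f : E → ℝ} {g g' x x' : E}
    (h : IsSubgradientAt f g x) (h' : IsSubgradientAt f g' x') : 0 ≤ ⟪g - g', x - x'⟫ := by
  have hx' := h x'
  have hx := h' x
  rw [← neg_sub x x', inner_neg_right] at hx'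
  rw [inner_sub_left]
  linarith

theorem sq_norm_smul_le_mul_inner_smul {v d : E} {c : ℝ} (h : ‖v‖ ^ 2 ≤ c * ⟪v, d⟫) (t : ℝ) :
    ‖t • v‖ ^ 2 ≤ c * t * ⟪t • v, d⟫ := by
  calc ‖t • v‖ ^ 2 = t ^ 2 * ‖v‖ ^ 2 := by rw [norm_smul, mul_pow, Real.norm_eq_abs, sq_abs]
    _ ≤ t ^ 2 * (c * ⟪v, d⟫) := by gcongr
    _ = c * t * ⟪t • v, d⟫ := by rw [real_inner_smul_left]; ring

theorem norm_le_mul_norm_of_sq_norm_le_mul_inner {v d : E} {c : ℝ} (hc : 0 ≤ c)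
    (h : ‖v‖ ^ 2 ≤ c * ⟪v, d⟫) : ‖v‖ ≤ c * ‖d‖ := by
  have hcs : ‖v‖ * ‖v‖ ≤ ‖v‖ * (c * ‖d‖) := by
    calc ‖v‖ * ‖v‖ = ‖v‖ ^ 2 := (sq _).symm
      _ ≤ c * ⟪v, d⟫ := h
      _ ≤ c * (‖v‖ * ‖d‖) := by gcongr; exact real_inner_le_norm v d
      _ = ‖v‖ * (c * ‖d‖) := by ring
  rcases (norm_nonneg v).eq_or_lt with hv | hv
  · rw [← hv]; positivity
  · exact le_of_mul_le_mul_left hcs hv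

end InnerProductSpace

namespace PhiRegular

variable {n : ℕ} (R : PhiRegular n) (z x z' x' : EuclideanSpace ℝ (Fin n))

theorem strong_monotone :
    2 * R.β * ‖(z - z') - (x - x')‖ ^ 2 + ⟪R.Dx z x - R.Dx z' x', z - z'⟫
      ≤ ⟪R.Dx z x - R.Dx z' x', x - x'⟫ := by
  have h₁ := R.strong z' z x' x
  have h₂ := R.strong z z' x x'
  have hw : ‖(z' - z) - (x' - x)‖ = ‖(z - z') - (x - x')‖ := by
    rw [← norm_neg]; congr 1; abel
  simp only [R.skew, hw, inner_neg_left, inner_sub_left, inner_sub_right] at h₁ h₂ ⊢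
  linarith

theorem two_mul_sq_norm_Dx_sub_le :
    2 * ‖R.Dx z x - R.Dx z' x'‖ ^ 2 ≤ R.L ^ 2 * ‖(z - z') - (x - x')‖ ^ 2 := by
  have h := R.lip z z' x x'
  rwa [R.skew, R.skew, neg_sub_neg, norm_sub_rev, ← two_mul] at h

theorem sq_norm_Dx_sub_le_mul_inner (hmono : 0 ≤ ⟪R.Dx z x - R.Dx z' x', z - z'⟫) :
    ‖R.Dx z x - R.Dx z' x'‖ ^ 2 ≤ R.L ^ 2 / (4 * R.β) * ⟪R.Dx z x - R.Dx z' x', x - x'⟫ := by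
  have hβ := R.β_pos
  have hstrong := R.strong_monotone z x z' x'
  have hlip := R.two_mul_sq_norm_Dx_sub_le z x z' x'
  rw [div_mul_eq_mul_div, le_div_iff₀ (by positivity)]
  calc ‖R.Dx z x - R.Dx z' x'‖ ^ 2 * (4 * R.β)
      = 2 * R.β * (2 * ‖R.Dx z x - R.Dx z' x'‖ ^ 2) := by ring
    _ ≤ 2 * R.β * (R.L ^ 2 * ‖(z - z') - (x - x')‖ ^ 2) := by gcongr
    _ = R.L ^ 2 * (2 * R.β * ‖(z - z') - (x - x')‖ ^ 2) := by ring
    _ ≤ R.L ^ 2 * ⟪R.Dx z x - R.Dx z' x', x - x'⟫ := by gcongr; linarith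

theorem isSubgradientAt_of_isMin {f : EuclideanSpace ℝ (Fin n) → ℝ} (hf : ConvexOn ℝ univ f)
    {lam : ℝ} (hmin : ∀ y, f z + (1 / lam) * R.φ z x ≤ f y + (1 / lam) * R.φ y x) :
    IsSubgradientAt f ((1 / lam) • R.Dx z x) z := by
  intro y
  have hderiv := (R.gradZ z x).hasFDerivAt.const_mul (1 / lam)
  have := hf.le_add_of_isMinOn_add (h := fun w => (1 / lam) * R.φ w x)
    (fun y _ => hmin y) hderiv (mem_univ z) (mem_univ y)
  simp only [smul_apply, InnerProductSpace.toDual_apply_apply, R.skew,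
    inner_neg_left, smul_eq_mul, real_inner_smul_left] at this ⊢
  linarith

end PhiRegular

/-- the gradient mapping `∇f_φ` satisfies
`‖∇f_φ(x) - ∇f_φ(x')‖² ≤ (L²/(4βλ)) ⟨∇f_φ(x) - ∇f_φ(x'), x - x'⟩`, and hence is
globally Lipschitz with constant `c = L²/(4βλ)`. -/
theorem phi_regularization_gradient_lipschitz (n : ℕ) (R : PhiRegular n)
    (f : EuclideanSpace ℝ (Fin n) → ℝ) (hf : ConvexOn ℝ univ f)
    (lam : ℝ) (hlam : 0 < lam)
    (p : EuclideanSpace ℝ (Fin n) → EuclideanSpace ℝ (Fin n))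
    (hp : ∀ x z, f (p x) + (1 / lam) * R.φ (p x) x ≤ f z + (1 / lam) * R.φ z x)
    (g : EuclideanSpace ℝ (Fin n) → EuclideanSpace ℝ (Fin n))
    (hg : ∀ x, g x = (1 / lam) • R.Dx (p x) x) :
    (∀ x x', ‖g x - g x'‖ ^ 2 ≤ R.L ^ 2 / (4 * R.β * lam) * ⟪g x - g x', x - x'⟫) ∧
    (∀ x x', ‖g x - g x'‖ ≤ R.L ^ 2 / (4 * R.β * lam) * ‖x - x'‖) := by
  have hsub : ∀ x, IsSubgradientAt f (g x) (p x) := fun x => by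
    rw [hg]; exact R.isSubgradientAt_of_isMin _ _ hf (hp x)
  have hcoco : ∀ x x', ‖g x - g x'‖ ^ 2 ≤ R.L ^ 2 / (4 * R.β * lam) * ⟪g x - g x', x - x'⟫ := by
    intro x x'
    have hv : g x - g x' = (1 / lam) • (R.Dx (p x) x - R.Dx (p x') x') := by
      rw [hg, hg, smul_sub]
    have hmono := (hsub x).inner_sub_nonneg (hsub x')
    rw [hv, real_inner_smul_left] at hmono
    have key := R.sq_norm_Dx_sub_le_mul_inner _ _ _ _
      (nonneg_of_mul_nonneg_right hmono (by positivity))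
    rw [hv]
    convert sq_norm_smul_le_mul_inner_smul key (1 / lam) using 2
    field_simp
  have hc : 0 ≤ R.L ^ 2 / (4 * R.β * lam) := by have := R.β_pos; positivity
  exact ⟨hcoco, fun x x' => norm_le_mul_norm_of_sq_norm_le_mul_inner hc (hcoco x x')⟩
end

section
/- For all x, x' ∈ ℝⁿ, ⟨∇f_φ(x) - ∇f_φ(x'), x - x'⟩ + ⟨∇f_φ(x) - ∇f_φ(x'), p(x') - p(x)⟩ ≥ (2β/λ)‖(p(x) - p(x')) - (x - x')‖². -/
open Set Filter Topology RealInnerProductSpace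

section

variable {E : Type*} [NormedAddCommGroup E] [InnerProductSpace ℝ E]

/-- Adding the two first-order lower bounds at `(z, x)` and at `(z', x')` cancels the values
of `φ` and leaves a strong-monotonicity estimate for the gradient. -/
theorem two_mul_norm_sq_le_inner_of_first_order_bound (φ : E → E → ℝ) (Dz Dx : E → E → E)
    (β : ℝ) (h : ∀ z' z x' x, φ z x + ⟪Dz z x, z' - z⟫ + ⟪Dx z x, x' - x⟫
      + β * ‖(z' - z) - (x' - x)‖ ^ 2 ≤ φ z' x') (z z' x x' : E) :
    2 * β * ‖(z - z') - (x - x')‖ ^ 2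
      ≤ ⟪Dz z x - Dz z' x', z - z'⟫ + ⟪Dx z x - Dx z' x', x - x'⟫ := by
  have h₁ := h z' z x' x
  have h₂ := h z z' x x'
  rw [← neg_sub z, ← neg_sub x, neg_sub_neg, norm_sub_rev, inner_neg_right,
    inner_neg_right] at h₁
  rw [inner_sub_left, inner_sub_left]
  linarith

end

theorem PhiRegular.two_mul_β_mul_norm_sq_le {n : ℕ} (R : PhiRegular n)
    (z z' x x' : EuclideanSpace ℝ (Fin n)) :
    2 * R.β * ‖(z - z') - (x - x')‖ ^ 2
      ≤ ⟪R.Dx z x - R.Dx z' x', x - x'⟫ + ⟪R.Dx z x - R.Dx z' x', z' - z⟫ := by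
  have h := two_mul_norm_sq_le_inner_of_first_order_bound R.φ R.Dz R.Dx R.β R.strong z z' x x'
  rwa [R.skew, R.skew, ← neg_sub', inner_neg_left, ← inner_neg_right, neg_sub, add_comm] at h

theorem phi_regularization_strong_monotonicity_general (n : ℕ) (R : PhiRegular n)
    (lam : ℝ) (hlam : 0 < lam)
    (p : EuclideanSpace ℝ (Fin n) → EuclideanSpace ℝ (Fin n))
    (g : EuclideanSpace ℝ (Fin n) → EuclideanSpace ℝ (Fin n))
    (hg : ∀ x, g x = (1 / lam) • R.Dx (p x) x) :
    ∀ x x', 2 * R.β / lam * ‖(p x - p x') - (x - x')‖ ^ 2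
      ≤ ⟪g x - g x', x - x'⟫ + ⟪g x - g x', p x' - p x⟫ := by
  intro x x'
  have hgx : g x - g x' = (1 / lam) • (R.Dx (p x) x - R.Dx (p x') x') := by
    rw [hg, hg, smul_sub]
  rw [hgx, real_inner_smul_left, real_inner_smul_left, ← mul_add, div_eq_mul_one_div,
    mul_comm _ (1 / lam), mul_assoc]
  exact mul_le_mul_of_nonneg_left (R.two_mul_β_mul_norm_sq_le _ _ _ _) (by positivity)

/-- the key strong-monotonicity estimate
`⟨∇f_φ(x) - ∇f_φ(x'), x - x'⟩ + ⟨∇f_φ(x) - ∇f_φ(x'), p(x') - p(x)⟩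
  ≥ (2β/λ) ‖(p(x) - p(x')) - (x - x')‖²`. -/
theorem phi_regularization_strong_monotonicity (n : ℕ) (R : PhiRegular n)
    (f : EuclideanSpace ℝ (Fin n) → ℝ) (hf : ConvexOn ℝ univ f)
    (lam : ℝ) (hlam : 0 < lam)
    (p : EuclideanSpace ℝ (Fin n) → EuclideanSpace ℝ (Fin n))
    (hp : ∀ x z, f (p x) + (1 / lam) * R.φ (p x) x ≤ f z + (1 / lam) * R.φ z x)
    (g : EuclideanSpace ℝ (Fin n) → EuclideanSpace ℝ (Fin n))
    (hg : ∀ x, g x = (1 / lam) • R.Dx (p x) x) :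
    ∀ x x', 2 * R.β / lam * ‖(p x - p x') - (x - x')‖ ^ 2
      ≤ ⟪g x - g x', x - x'⟫ + ⟪g x - g x', p x' - p x⟫ :=
  phi_regularization_strong_monotonicity_general n R lam hlam p g hg
end

section
/- If f(x) = f_φ(x), then x minimizes f over ℝⁿ. -/
/-!
Since `f x = f_φ x`, the point `x` minimizes `f + φ(·, x) / λ`. From `φ(x, x) = 0`,
`∇_z φ(x, x) = 0`, the Lipschitz bound on `∇φ` and the strong-convexity inequality one gets
`φ(z, x) ≤ L ‖z - x‖²`, hence `f x ≤ f z + (L / λ) ‖z - x‖²` for every `z`. Applied at the points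
`x + t (z - x)` and combined with convexity of `f`, this gives `f x ≤ f z + O(t)` for `t ∈ (0, 1]`;
let `t → 0`.
-/

open Set Filter Topology RealInnerProductSpace

theorem ConvexOn.le_of_forall_le_add_mul_norm_sub_sq {E : Type*} [SeminormedAddCommGroup E]
    [NormedSpace ℝ E] {f : E → ℝ} (hf : ConvexOn ℝ univ f) {x : E} {C : ℝ}
    (h : ∀ y, f x ≤ f y + C * ‖y - x‖ ^ 2) (z : E) : f x ≤ f z := by
  have along_segment : ∀ t ∈ Ioc (0 : ℝ) 1, f x ≤ f z + C * ‖z - x‖ ^ 2 * t := by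
    rintro t ⟨ht₀, ht₁⟩
    have hconv : f (x + t • (z - x)) ≤ (1 - t) * f x + t * f z := by
      have hpt : (1 - t) • x + t • z = x + t • (z - x) := by module
      simpa only [hpt, smul_eq_mul] using
        hf.2 (mem_univ x) (mem_univ z) (sub_nonneg.2 ht₁) ht₀.le (sub_add_cancel 1 t)
    have hnorm : ‖x + t • (z - x) - x‖ ^ 2 = t ^ 2 * ‖z - x‖ ^ 2 := by
      rw [add_sub_cancel_left, norm_smul, Real.norm_of_nonneg ht₀.le, mul_pow]
    have hquad := h (x + t • (z - x))
    rw [hnorm] at hquad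
    nlinarith
  have hlim : Tendsto (fun t : ℝ => f z + C * ‖z - x‖ ^ 2 * t) (𝓝[>] 0) (𝓝 (f z)) := by
    have : Continuous fun t : ℝ => f z + C * ‖z - x‖ ^ 2 * t := by fun_prop
    simpa using (this.tendsto 0).mono_left nhdsWithin_le_nhds
  exact ge_of_tendsto hlim (eventually_of_mem (Ioc_mem_nhdsGT one_pos) along_segment)

namespace PhiRegular

variable {n : ℕ} (R : PhiRegular n) (z x : EuclideanSpace ℝ (Fin n))

theorem φ_self : R.φ x x = 0 := (R.eq_zero_iff x x).2 rfl

theorem Dz_self : R.Dz x x = 0 := by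
  have hmin : IsLocalMin (fun z' => R.φ z' x) x :=
    Eventually.of_forall fun z' => (R.φ_self x).trans_le (R.nonneg z' x)
  simpa using hmin.hasFDerivAt_eq_zero (R.gradZ x x).hasFDerivAt

theorem norm_Dz_le_mul_norm_sub : ‖R.Dz z x‖ ≤ R.L * ‖z - x‖ := by
  have h := R.lip z x x x
  simp only [sub_self, sub_zero, Dz_self] at h
  rw [← sq_le_sq₀ (norm_nonneg _) (mul_nonneg R.L_pos.le (norm_nonneg _)), mul_pow]
  nlinarith [sq_nonneg ‖R.Dx z x - R.Dx x x‖]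

theorem φ_le_mul_norm_sub_sq : R.φ z x ≤ R.L * ‖z - x‖ ^ 2 := by
  have h := R.strong x z x x
  simp only [sub_self, sub_zero, φ_self, inner_zero_right, add_zero] at h
  have hcs : ⟪R.Dz z x, z - x⟫ ≤ ‖R.Dz z x‖ * ‖z - x‖ := real_inner_le_norm _ _
  have := mul_le_mul_of_nonneg_right (R.norm_Dz_le_mul_norm_sub z x) (norm_nonneg (z - x))
  rw [← neg_sub z x, inner_neg_right] at h
  nlinarith [R.β_pos, sq_nonneg ‖z - x‖]

end PhiRegular

/-- if `f(x) = f_φ(x)`, then `x` minimizes `f` over ℝⁿ. -/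
theorem min_of_f_eq_fphi (n : ℕ) (R : PhiRegular n)
    (f : EuclideanSpace ℝ (Fin n) → ℝ) (hf : ConvexOn ℝ univ f)
    (lam : ℝ) (hlam : 0 < lam)
    (p : EuclideanSpace ℝ (Fin n) → EuclideanSpace ℝ (Fin n))
    (hp : ∀ x z, f (p x) + (1 / lam) * R.φ (p x) x ≤ f z + (1 / lam) * R.φ z x)
    (fphi : EuclideanSpace ℝ (Fin n) → ℝ)
    (hfphi : ∀ x, fphi x = f (p x) + (1 / lam) * R.φ (p x) x)
    (x : EuclideanSpace ℝ (Fin n)) (hx : f x = fphi x) :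
    ∀ z, f x ≤ f z := by
  refine hf.le_of_forall_le_add_mul_norm_sub_sq (C := R.L / lam) fun z => ?_
  have hprox : f x ≤ f z + (1 / lam) * R.φ z x := hx.trans_le ((hfphi x).trans_le (hp x z))
  have hφ : (1 / lam) * R.φ z x ≤ R.L / lam * ‖z - x‖ ^ 2 := by
    rw [one_div_mul_eq_div, div_mul_eq_mul_div]
    exact div_le_div_of_nonneg_right (R.φ_le_mul_norm_sub_sq z x) hlam.le
  linarith
end

section
/- Let pᵃ(x,ε) satisfy f(pᵃ(x,ε)) + (1/λ)φ(pᵃ(x,ε),x) ≤ f_φ(x) + ε and define gᵃ(x,ε) = (1/λ)∇_x φ(pᵃ(x,ε), x). Then ‖gᵃ(x,ε) - ∇f_φ(x)‖ ≤ √(L²ε/(βλ)). -/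
/-!
Multiplied by `λ`, the proximal objective `λ f + φ(·, x)` is uniformly convex with modulus
`β r²`: `f` is convex and `φ(·, x)` has a quadratic first-order lower bound. For a uniformly
convex function, comparing values along the segment from the minimizer `p(x)` to `pᵃ` and letting
the segment shrink gives quadratic growth, here `β ‖pᵃ - p(x)‖² ≤ λ ε`. The Lipschitz bound on
`∇φ` turns this into `‖∇ₓφ(pᵃ, x) - ∇ₓφ(p(x), x)‖² ≤ L² λ ε / β`, and the factor `1/λ` does the rest.
-/

open Set Filter Topology RealInnerProductSpace

theorem UniformConvexOn.le_sub_of_isMinOn {E : Type*} [NormedAddCommGroup E] [NormedSpace ℝ E]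
    {s : Set E} {ψ : ℝ → ℝ} {F : E → ℝ} {x y : E} (hF : UniformConvexOn s ψ F)
    (hmin : IsMinOn F s x) (hx : x ∈ s) (hy : y ∈ s) :
    ψ ‖y - x‖ ≤ F y - F x := by
  have hsegment : ∀ t ∈ Ioo (0 : ℝ) 1, (1 - t) * ψ ‖y - x‖ ≤ F y - F x := by
    rintro t ⟨ht0, ht1⟩
    have hconv := hF.2 hx hy (sub_nonneg.2 ht1.le) ht0.le (sub_add_cancel 1 t)
    have hmin_t := hmin (hF.1 hx hy (sub_nonneg.2 ht1.le) ht0.le (sub_add_cancel 1 t))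
    rw [smul_eq_mul, smul_eq_mul, norm_sub_rev] at hconv
    have : t * ((1 - t) * ψ ‖y - x‖) ≤ t * (F y - F x) := by linarith [hmin_t.out]
    exact le_of_mul_le_mul_left this ht0
  have hlim : Tendsto (fun t : ℝ => (1 - t) * ψ ‖y - x‖) (𝓝[>] 0) (𝓝 (ψ ‖y - x‖)) := by
    have : Continuous (fun t : ℝ => (1 - t) * ψ ‖y - x‖) := by fun_prop
    simpa using (this.tendsto 0).mono_left nhdsWithin_le_nhds
  exact le_of_tendsto hlim (mem_of_superset (Ioo_mem_nhdsGT one_pos) hsegment)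

theorem uniformConvexOn_univ_of_add_inner_le {E : Type*} [NormedAddCommGroup E]
    [InnerProductSpace ℝ E] {F : E → ℝ} {g : E → E} {β : ℝ}
    (h : ∀ z z', F z + ⟪g z, z' - z⟫ + β * ‖z' - z‖ ^ 2 ≤ F z') :
    UniformConvexOn univ (fun r => β * r ^ 2) F := by
  refine ⟨convex_univ, fun x _ y _ a b ha hb hab => ?_⟩
  obtain rfl : a = 1 - b := by linarith
  set z := (1 - b) • x + b • y
  have hxz : x - z = b • (x - y) := by module
  have hyz : y - z = -((1 - b) • (x - y)) := by module
  have hx := h z x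
  have hy := h z y
  rw [hxz, inner_smul_right, norm_smul, Real.norm_of_nonneg hb] at hx
  rw [hyz, inner_neg_right, inner_smul_right, norm_neg, norm_smul, Real.norm_of_nonneg ha] at hy
  rw [smul_eq_mul, smul_eq_mul]
  -- the first-order terms cancel in the convex combination of `hx` and `hy`
  nlinarith [mul_le_mul_of_nonneg_left hx ha, mul_le_mul_of_nonneg_left hy hb]

namespace PhiRegular

variable {n : ℕ} (R : PhiRegular n)

theorem uniformConvexOn_φ (x : EuclideanSpace ℝ (Fin n)) :
    UniformConvexOn univ (fun r => R.β * r ^ 2) (R.φ · x) :=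
  uniformConvexOn_univ_of_add_inner_le fun z z' => by simpa using R.strong z' z x x

theorem sq_norm_Dx_sub_le (z' z x : EuclideanSpace ℝ (Fin n)) :
    ‖R.Dx z' x - R.Dx z x‖ ^ 2 ≤ R.L ^ 2 * ‖z' - z‖ ^ 2 := by
  have h := R.lip z' z x x
  simp only [sub_self, sub_zero] at h
  linarith [sq_nonneg ‖R.Dz z' x - R.Dz z x‖]

theorem sq_norm_sub_le_of_le_min_add {f : EuclideanSpace ℝ (Fin n) → ℝ} (hf : ConvexOn ℝ univ f)
    {lam ε : ℝ} (hlam : 0 < lam) {x z₀ z : EuclideanSpace ℝ (Fin n)}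
    (hmin : ∀ z', f z₀ + (1 / lam) * R.φ z₀ x ≤ f z' + (1 / lam) * R.φ z' x)
    (hz : f z + (1 / lam) * R.φ z x ≤ f z₀ + (1 / lam) * R.φ z₀ x + ε) :
    ‖z - z₀‖ ^ 2 ≤ lam * ε / R.β := by
  set F := lam • f + (R.φ · x)
  have hF : UniformConvexOn univ (0 + fun r => R.β * r ^ 2) F :=
    (uniformConvexOn_zero.2 (hf.smul hlam.le)).add (R.uniformConvexOn_φ x)
  have hscale : ∀ w, lam * (f w + (1 / lam) * R.φ w x) = F w := fun w => by
    simp only [F, Pi.add_apply, Pi.smul_apply, smul_eq_mul]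
    field_simp
  have hminF : IsMinOn F univ z₀ := fun z' _ => show F z₀ ≤ F z' by
    simpa only [hscale] using mul_le_mul_of_nonneg_left (hmin z') hlam.le
  have hzF : F z ≤ F z₀ + lam * ε := by
    simpa only [mul_add, hscale] using mul_le_mul_of_nonneg_left hz hlam.le
  have hgrowth := hF.le_sub_of_isMinOn hminF (mem_univ z₀) (mem_univ z)
  simp only [Pi.add_apply, Pi.zero_apply, zero_add] at hgrowth
  rw [le_div_iff₀ R.β_pos]
  linarith

end PhiRegular

theorem approx_gradient_dist_general (n : ℕ) (R : PhiRegular n)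
    (f : EuclideanSpace ℝ (Fin n) → ℝ) (hf : ConvexOn ℝ univ f)
    (lam : ℝ) (hlam : 0 < lam) (ε : ℝ)
    (p : EuclideanSpace ℝ (Fin n) → EuclideanSpace ℝ (Fin n))
    (hp : ∀ x z, f (p x) + (1 / lam) * R.φ (p x) x ≤ f z + (1 / lam) * R.φ z x)
    (fphi : EuclideanSpace ℝ (Fin n) → ℝ)
    (hfphi : ∀ x, fphi x = f (p x) + (1 / lam) * R.φ (p x) x)
    (x pa : EuclideanSpace ℝ (Fin n))
    (hpa : f pa + (1 / lam) * R.φ pa x ≤ fphi x + ε) :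
    ‖(1 / lam) • R.Dx pa x - (1 / lam) • R.Dx (p x) x‖
      ≤ Real.sqrt (R.L ^ 2 * ε / (R.β * lam)) := by
  have hdist : ‖pa - p x‖ ^ 2 ≤ lam * ε / R.β :=
    R.sq_norm_sub_le_of_le_min_add hf hlam (hp x) (hfphi x ▸ hpa)
  have hgrad : ‖R.Dx pa x - R.Dx (p x) x‖ ^ 2 ≤ R.L ^ 2 * (lam * ε / R.β) :=
    (R.sq_norm_Dx_sub_le pa (p x) x).trans (by gcongr)
  rw [← smul_sub, norm_smul, Real.norm_of_nonneg (by positivity)]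
  apply Real.le_sqrt_of_sq_le
  calc (1 / lam * ‖R.Dx pa x - R.Dx (p x) x‖) ^ 2
      = ‖R.Dx pa x - R.Dx (p x) x‖ ^ 2 / lam ^ 2 := by ring
    _ ≤ R.L ^ 2 * (lam * ε / R.β) / lam ^ 2 := by gcongr
    _ = R.L ^ 2 * ε / (R.β * lam) := by field_simp

/-- Lemma 2, (12): `‖gᵃ(x,ε) - ∇f_φ(x)‖ ≤ √(L²ε/(βλ))`, where
`gᵃ(x,ε) = (1/λ) ∇_x φ(pᵃ(x,ε), x)` and `∇f_φ(x) = (1/λ) ∇_x φ(p(x), x)`. -/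
theorem approx_gradient_dist (n : ℕ) (R : PhiRegular n)
    (f : EuclideanSpace ℝ (Fin n) → ℝ) (hf : ConvexOn ℝ univ f)
    (lam : ℝ) (hlam : 0 < lam) (ε : ℝ) (hε : 0 < ε)
    (p : EuclideanSpace ℝ (Fin n) → EuclideanSpace ℝ (Fin n))
    (hp : ∀ x z, f (p x) + (1 / lam) * R.φ (p x) x ≤ f z + (1 / lam) * R.φ z x)
    (fphi : EuclideanSpace ℝ (Fin n) → ℝ)
    (hfphi : ∀ x, fphi x = f (p x) + (1 / lam) * R.φ (p x) x)
    (x pa : EuclideanSpace ℝ (Fin n))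
    (hpa : f pa + (1 / lam) * R.φ pa x ≤ fphi x + ε) :
    ‖(1 / lam) • R.Dx pa x - (1 / lam) • R.Dx (p x) x‖
      ≤ Real.sqrt (R.L ^ 2 * ε / (R.β * lam)) :=
  approx_gradient_dist_general n R f hf lam hlam ε p hp fphi hfphi x pa hpa
end

section
/- Suppose x̄ is an optimal solution of min_{x∈ℝⁿ} f_φ(x), where f_φ is convex and differentiable with Lipschitz gradient g = ∇f_φ, and g is BD-regular at x̄ (every matrix in ∂_B g(x̄) is nonsingular). Then x̄ is the unique optimal solution. -/
/-!
Let `y` be a second minimizer and `d = y - x̄ ≠ 0`. By convexity the segment `[x̄, y]` consists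
of minimizers, so `g` vanishes on it. On a line `s ↦ z + s • d` at distance `r` from the segment,
`s ↦ ⟪g (z + s • d), d⟫` is monotone (it is the derivative of a convex function of `s`), and by the
Lipschitz bound it increases by at most `2 K r ‖d‖` over `[0, e]`. By Rademacher and Fubini, `g` is
differentiable at almost every point of almost every such line, so some point `u` on it has
`⟪∇g(u) d, d⟫ ≤ 2 K r ‖d‖ / e`. Letting `r = e² → 0` and extracting a convergent subsequence of the
Jacobians gives `A ∈ ∂_B g(x̄)`, positive semidefinite as a limit of Hessians, with `⟪A d, d⟫ = 0`,
hence `A d = 0`, contradicting BD-regularity.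
-/

open Set Filter Topology RealInnerProductSpace

/-- The B-subdifferential `∂_B g(x)` of `g` at `x`: the set of (continuous linear) maps
arising as limits `A = lim ∇g(xᵏ)` along sequences `xᵏ → x` of differentiability points. -/
def BSubdiff {n : ℕ} (g : EuclideanSpace ℝ (Fin n) → EuclideanSpace ℝ (Fin n))
    (x : EuclideanSpace ℝ (Fin n)) :
    Set (EuclideanSpace ℝ (Fin n) →L[ℝ] EuclideanSpace ℝ (Fin n)) :=
  {A | ∃ u : ℕ → EuclideanSpace ℝ (Fin n),
    (∀ k, DifferentiableAt ℝ g (u k)) ∧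
    Tendsto u atTop (𝓝 x) ∧
    Tendsto (fun k => fderiv ℝ g (u k)) atTop (𝓝 A)}

open MeasureTheory

theorem hasDerivAt_add_smul {E : Type*} [NormedAddCommGroup E] [NormedSpace ℝ E] (p v : E)
    (t : ℝ) : HasDerivAt (fun s : ℝ => p + s • v) v t := by
  simpa using ((hasDerivAt_id t).smul_const v).const_add p

section InnerProduct

variable {E : Type*} [NormedAddCommGroup E] [InnerProductSpace ℝ E] {g : E → E} {K : NNReal}

theorem ContinuousLinearMap.isClosed_setOf_isPositive :
    IsClosed {T : E →L[ℝ] E | T.IsPositive} := by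
  have hcont : ∀ x y : E, Continuous fun T : E →L[ℝ] E => ⟪T x, y⟫ := fun x y =>
    (ContinuousLinearMap.apply ℝ E x).continuous.inner continuous_const
  simp only [ContinuousLinearMap.isPositive_iff, LinearMap.IsSymmetric, ofPred_and, ofPred_forall]
  refine (isClosed_iInter fun x => isClosed_iInter fun y => isClosed_eq (hcont x y) ?_).inter
    (isClosed_iInter fun x => isClosed_le continuous_const (hcont x x))
  exact continuous_const.inner (ContinuousLinearMap.apply ℝ E y).continuous

theorem ContinuousLinearMap.IsPositive.apply_eq_zero_of_inner_apply_self_eq_zero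
    {T : E →L[ℝ] E} (hT : T.IsPositive) {x : E} (hx : ⟪T x, x⟫ = 0) : T x = 0 := by
  have horth : ∀ y, ⟪T x, y⟫ = 0 := by
    intro y
    have hquad : ∀ t : ℝ, 0 ≤ ⟪T y, y⟫ * (t * t) + 2 * ⟪T x, y⟫ * t + 0 := by
      intro t
      have h := hT.inner_nonneg_left (x + t • y)
      have hsymm : ⟪T y, x⟫ = ⟪T x, y⟫ := by
        rw [hT.inner_left_eq_inner_right, real_inner_comm]
      simp only [map_add, map_smul, inner_add_left, inner_add_right, real_inner_smul_left,
        real_inner_smul_right, hx, hsymm] at h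
      linarith
    have := discrim_le_zero hquad
    rw [discrim] at this
    nlinarith [sq_nonneg ⟪T x, y⟫]
  exact inner_self_eq_zero.1 (horth (T x))

theorem DifferentiableAt.hasDerivAt_inner_comp_add_smul {p v : E} {t : ℝ}
    (h : DifferentiableAt ℝ g (p + t • v)) :
    HasDerivAt (fun s : ℝ => ⟪g (p + s • v), v⟫) ⟪fderiv ℝ g (p + t • v) v, v⟫ t := by
  simpa using (h.hasFDerivAt.comp_hasDerivAt t (hasDerivAt_add_smul p v t)).inner ℝ
    (hasDerivAt_const t v)

theorem LipschitzWith.abs_inner_le_of_apply_eq_zero (hg : LipschitzWith K g) {y : E} (hy : g y = 0)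
    (w v : E) : |⟪g w, v⟫| ≤ K * dist w y * ‖v‖ := by
  calc |⟪g w, v⟫| ≤ ‖g w‖ * ‖v‖ := abs_real_inner_le_norm _ _
    _ ≤ K * dist w y * ‖v‖ := by
      gcongr
      simpa [hy, dist_eq_norm] using hg.dist_le_mul w y

end InnerProduct

theorem Monotone.exists_deriv_le_slope {f : ℝ → ℝ} (hf : Monotone f) {a b : ℝ} (hab : a < b)
    {s : Set ℝ} (hs : ∀ᵐ t, t ∈ s) : ∃ t ∈ s ∩ Ioo a b, deriv f t ≤ slope f a b := by
  by_contra! hlt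
  have hlt_ae : ∀ᵐ t ∂volume.restrict (Ioc a b), slope f a b < deriv f t := by
    refine ae_restrict_of_ae_eq_of_ae_restrict Ioo_ae_eq_Ioc ?_
    rw [ae_restrict_iff' measurableSet_Ioo]
    filter_upwards [hs] with t hts htab using hlt t ⟨hts, htab⟩
  have hne : volume.restrict (Ioc a b) {t | slope f a b < deriv f t} ≠ 0 := by
    intro h0
    have : (ae (volume.restrict (Ioc a b))).NeBot := by
      rw [ae_restrict_neBot, Real.volume_Ioc]
      simpa using hab
    obtain ⟨t, ht, ht'⟩ := (hlt_ae.and (measure_eq_zero_iff_ae_notMem.1 h0)).exists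
    exact ht' ht
  have hmono := hf.monotoneOn (uIcc a b)
  have hint_lt := intervalIntegral.integral_lt_integral_of_ae_le_of_measure_setOfPred_lt_ne_zero
    hab.le intervalIntegrable_const hmono.intervalIntegrable_deriv (ae_le_of_ae_lt hlt_ae) hne
  have hint_le := hmono.intervalIntegral_deriv_mem_uIcc
  rw [uIcc_of_le (sub_nonneg.2 (hf hab.le))] at hint_le
  rw [intervalIntegral.integral_const, slope_def_field, smul_eq_mul,
    mul_div_cancel₀ _ (sub_ne_zero.2 hab.ne')] at hint_lt
  linarith [hint_le.2]

theorem ae_ae_add_smul {E : Type*} [NormedAddCommGroup E] [NormedSpace ℝ E] [MeasurableSpace E]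
    [BorelSpace E] [SecondCountableTopology E] {μ : Measure E} [SFinite μ]
    [μ.IsAddRightInvariant] {p : E → Prop} (hp : ∀ᵐ x ∂μ, p x) (v : E) :
    ∀ᵐ z ∂μ, ∀ᵐ t : ℝ, p (z + t • v) := by
  set N := toMeasurable μ {x | ¬p x}
  have hN : μ N = 0 := by rw [measure_toMeasurable]; exact ae_iff.1 hp
  set S := {q : E × ℝ | q.1 + q.2 • v ∈ N}
  have hS : MeasurableSet S :=
    (measurable_fst.add (measurable_snd.smul_const v)) (measurableSet_toMeasurable _ _)
  have hS_null : μ.prod volume S = 0 := by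
    have hslice (t : ℝ) : μ {z | z + t • v ∈ N} = 0 :=
      (measure_preimage_add_right μ (t • v) N).trans hN
    rw [Measure.prod_apply_symm hS]
    simp [S, hslice]
  filter_upwards [(Measure.measure_prod_null hS).1 hS_null] with z hz
  exact measure_mono_null (fun t ht => subset_toMeasurable μ _ ht) hz

section Gradient

variable {E : Type*} [NormedAddCommGroup E] [InnerProductSpace ℝ E] [CompleteSpace E]
  {f : E → ℝ} {g : E → E}

theorem HasGradientAt.hasDerivAt_comp_add_smul {p v f' : E} {t : ℝ}
    (h : HasGradientAt f f' (p + t • v)) :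
    HasDerivAt (fun s : ℝ => f (p + s • v)) ⟪f', v⟫ t := by
  have := h.hasFDerivAt.comp_hasDerivAt t (hasDerivAt_add_smul p v t)
  simp only [InnerProductSpace.toDual_apply_apply] at this
  exact this

theorem ConvexOn.monotone_inner_gradient_add_smul (hf : ConvexOn ℝ univ f)
    (hgrad : ∀ x, HasGradientAt f (g x) x) (p v : E) :
    Monotone fun s : ℝ => ⟪g (p + s • v), v⟫ := by
  have hderiv (s : ℝ) : HasDerivAt (fun s : ℝ => f (p + s • v)) ⟪g (p + s • v), v⟫ s :=
    (hgrad _).hasDerivAt_comp_add_smul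
  have hconv : ConvexOn ℝ univ fun s : ℝ => f (p + s • v) := by
    simpa [Function.comp_def, AffineMap.lineMap_apply, add_comm p] using
      hf.comp_affineMap (AffineMap.lineMap p (p + v))
  intro a b hab
  simpa only [(hderiv _).deriv] using
    hconv.monotoneOn_deriv (fun s _ => (hderiv s).differentiableAt) trivial trivial hab

theorem isSymmetric_fderiv_of_hasGradientAt (hgrad : ∀ x, HasGradientAt f (g x) x) {x : E}
    (hx : DifferentiableAt ℝ g x) : (fderiv ℝ g x).IsSymmetric := by
  let L := (InnerProductSpace.toDual ℝ E).toContinuousLinearEquiv.toContinuousLinearMap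
  have hL : HasFDerivAt (fun y => L (g y)) (L.comp (fderiv ℝ g x)) x :=
    L.hasFDerivAt.comp x hx.hasFDerivAt
  intro v w
  simpa [L, real_inner_comm] using
    second_derivative_symmetric (fun y => (hgrad y).hasFDerivAt) hL v w

theorem ConvexOn.isPositive_fderiv_of_hasGradientAt (hf : ConvexOn ℝ univ f)
    (hgrad : ∀ x, HasGradientAt f (g x) x) {x : E} (hx : DifferentiableAt ℝ g x) :
    (fderiv ℝ g x).IsPositive := by
  refine (ContinuousLinearMap.isPositive_iff _).2
    ⟨isSymmetric_fderiv_of_hasGradientAt hgrad hx, fun v => ?_⟩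
  have hderiv := DifferentiableAt.hasDerivAt_inner_comp_add_smul (p := x) (v := v) (t := 0)
    (by simpa using hx)
  simpa [hderiv.deriv] using
    (hf.monotone_inner_gradient_add_smul hgrad x v).deriv_nonneg (x := 0)

theorem ConvexOn.gradient_eq_zero_of_mem_segment (hf : ConvexOn ℝ univ f)
    (hgrad : ∀ x, HasGradientAt f (g x) x) {x y : E} (hx : ∀ z, f x ≤ f z) (hy : f y ≤ f x)
    {t : ℝ} (ht : t ∈ Icc (0 : ℝ) 1) : g (x + t • (y - x)) = 0 := by
  have hmem : x + t • (y - x) ∈ {z ∈ univ | f z ≤ f x} :=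
    (hf.convex_le (f x)).add_smul_sub_mem ⟨trivial, le_rfl⟩ ⟨trivial, hy⟩ ht
  have hmin : IsLocalMin f (x + t • (y - x)) :=
    Eventually.of_forall fun z => hmem.2.trans (hx z)
  exact (InnerProductSpace.toDual ℝ E).map_eq_zero_iff.1
    (hmin.hasFDerivAt_eq_zero (hgrad _).hasFDerivAt)

end Gradient

theorem exists_differentiableAt_inner_fderiv_le {E : Type*} [NormedAddCommGroup E]
    [InnerProductSpace ℝ E] [FiniteDimensional ℝ E] [MeasurableSpace E] [BorelSpace E]
    {f : E → ℝ} {g : E → E} {K : NNReal} (hf : ConvexOn ℝ univ f)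
    (hgrad : ∀ x, HasGradientAt f (g x) x) (hg : LipschitzWith K g) {x d : E} {r e : ℝ}
    (hr : 0 < r) (he : 0 < e) (h₀ : g x = 0) (h₁ : g (x + e • d) = 0) :
    ∃ u, DifferentiableAt ℝ g u ∧ dist u x < r + e * ‖d‖ ∧
      ⟪fderiv ℝ g u d, d⟫ ≤ 2 * K * r * ‖d‖ / e := by
  obtain ⟨z, hz, hzd⟩ : ∃ z ∈ Metric.ball x r, ∀ᵐ t : ℝ, DifferentiableAt ℝ g (z + t • d) := by
    have hae := ae_ae_add_smul (hg.ae_differentiableAt (μ := Measure.addHaar)) d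
    have : (ae (Measure.addHaar.restrict (Metric.ball x r))).NeBot :=
      ae_restrict_neBot.2 (Metric.measure_ball_pos _ x hr).ne'
    exact ((ae_restrict_mem measurableSet_ball).and (ae_restrict_of_ae hae)).exists
  set φ := fun s : ℝ => ⟪g (z + s • d), d⟫
  obtain ⟨t, ⟨htd, ht⟩, hφ⟩ :=
    (hf.monotone_inner_gradient_add_smul hgrad z d).exists_deriv_le_slope he hzd
  refine ⟨z + t • d, htd, ?_, ?_⟩
  · calc dist (z + t • d) x ≤ dist z x + ‖t • d‖ := by
          simpa [dist_eq_norm, add_sub_right_comm] using norm_add_le (z - x) (t • d)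
      _ < r + e * ‖d‖ := by
          rw [norm_smul, Real.norm_of_nonneg ht.1.le]
          exact add_lt_add_of_lt_of_le hz (by gcongr; exact ht.2.le)
  · have hφ₀ : |φ 0| ≤ K * r * ‖d‖ := by
      refine (hg.abs_inner_le_of_apply_eq_zero h₀ _ d).trans ?_
      simp only [zero_smul, add_zero]
      gcongr
      exact (Metric.mem_ball.1 hz).le
    have hφ₁ : |φ e| ≤ K * r * ‖d‖ := by
      refine (hg.abs_inner_le_of_apply_eq_zero h₁ _ d).trans ?_
      rw [dist_add_right]
      gcongr
      exact (Metric.mem_ball.1 hz).le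
    rw [← (DifferentiableAt.hasDerivAt_inner_comp_add_smul htd).deriv]
    calc deriv φ t ≤ slope φ 0 e := hφ
      _ ≤ 2 * K * r * ‖d‖ / e := by
        rw [slope_def_field, sub_zero]
        gcongr
        linarith [le_abs_self (φ e), neg_abs_le (φ 0)]

section BSubdiff

variable {n : ℕ} {g : EuclideanSpace ℝ (Fin n) → EuclideanSpace ℝ (Fin n)} {K : NNReal}

theorem exists_mem_BSubdiff_of_tendsto (hg : LipschitzWith K g) {x : EuclideanSpace ℝ (Fin n)}
    {u : ℕ → EuclideanSpace ℝ (Fin n)} (hdiff : ∀ k, DifferentiableAt ℝ g (u k))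
    (hu : Tendsto u atTop (𝓝 x)) :
    ∃ A ∈ BSubdiff g x, ∃ φ : ℕ → ℕ, StrictMono φ ∧
      Tendsto (fun k => fderiv ℝ g (u (φ k))) atTop (𝓝 A) := by
  obtain ⟨A, -, φ, hφ, hA⟩ := (isCompact_closedBall (0 : EuclideanSpace ℝ (Fin n) →L[ℝ]
    EuclideanSpace ℝ (Fin n)) K).tendsto_subseq
      fun k => mem_closedBall_zero_iff.2 (norm_fderiv_le_of_lipschitz ℝ hg)
  exact ⟨A, ⟨u ∘ φ, fun k => hdiff _, hu.comp hφ.tendsto_atTop, hA⟩, φ, hφ, hA⟩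

theorem exists_mem_BSubdiff_apply_eq_zero {f : EuclideanSpace ℝ (Fin n) → ℝ}
    (hf : ConvexOn ℝ univ f) (hgrad : ∀ x, HasGradientAt f (g x) x) (hg : LipschitzWith K g)
    (x d : EuclideanSpace ℝ (Fin n)) (hseg : ∀ t ∈ Icc (0 : ℝ) 1, g (x + t • d) = 0) :
    ∃ A ∈ BSubdiff g x, A d = 0 := by
  set ε : ℕ → ℝ := fun k => 1 / ((k : ℝ) + 1)
  have hε_pos (k : ℕ) : 0 < ε k := by positivity
  have hε_le (k : ℕ) : ε k ≤ 1 := div_le_one_of_le₀ (by simp) (by positivity)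
  have hε : Tendsto ε atTop (𝓝 0) := tendsto_one_div_add_atTop_nhds_zero_nat
  choose u hdiff hdist hinner using fun k =>
    exists_differentiableAt_inner_fderiv_le hf hgrad hg (pow_pos (hε_pos k) 2) (hε_pos k)
      (by simpa using hseg 0 (by simp)) (hseg (ε k) ⟨(hε_pos k).le, hε_le k⟩)
  have hu : Tendsto u atTop (𝓝 x) := by
    refine tendsto_iff_dist_tendsto_zero.2 (squeeze_zero (fun _ => dist_nonneg)
      (fun k => (hdist k).le) ?_)
    simpa using (hε.pow 2).add (hε.mul_const ‖d‖)
  obtain ⟨A, hA, φ, hφ, hlim⟩ := exists_mem_BSubdiff_of_tendsto hg hdiff hu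
  have hpos : A.IsPositive := ContinuousLinearMap.isClosed_setOf_isPositive.mem_of_tendsto hlim
    (Eventually.of_forall fun k => hf.isPositive_fderiv_of_hasGradientAt hgrad (hdiff _))
  have hbound (k : ℕ) : ⟪fderiv ℝ g (u k) d, d⟫ ≤ 2 * K * ‖d‖ * ε k := by
    refine (hinner k).trans_eq ?_
    field_simp [(hε_pos k).ne']
  have hAd : ⟪A d, d⟫ ≤ 0 := by
    refine le_of_tendsto_of_tendsto
      (((ContinuousLinearMap.apply ℝ _ d).continuous.inner continuous_const).tendsto A |>.comp hlim)
      (by simpa using (hε.comp hφ.tendsto_atTop).const_mul (2 * K * ‖d‖))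
      (Eventually.of_forall fun k => hbound (φ k))
  exact ⟨A, hA,
    hpos.apply_eq_zero_of_inner_apply_self_eq_zero (le_antisymm hAd (hpos.inner_nonneg_left d))⟩

end BSubdiff

/-- Lemma 3: if `x̄` minimizes the convex differentiable function `f_φ`
whose Lipschitz gradient `g = ∇f_φ` is BD-regular at `x̄`, then `x̄` is the unique minimizer. -/
theorem unique_min_of_BD_regular (n : ℕ)
    (fphi : EuclideanSpace ℝ (Fin n) → ℝ)
    (g : EuclideanSpace ℝ (Fin n) → EuclideanSpace ℝ (Fin n))
    (hconv : ConvexOn ℝ univ fphi)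
    (hgrad : ∀ x, HasGradientAt fphi (g x) x)
    (K : NNReal) (hgLip : LipschitzWith K g)
    (xbar : EuclideanSpace ℝ (Fin n))
    (hmin : ∀ x, fphi xbar ≤ fphi x)
    (hBD : ∀ A ∈ BSubdiff g xbar, Function.Injective A) :
    ∀ y, (∀ x, fphi y ≤ fphi x) → y = xbar := by
  intro y hy
  obtain ⟨A, hA, hAd⟩ := exists_mem_BSubdiff_apply_eq_zero hconv hgrad hgLip xbar (y - xbar)
    fun t ht => hconv.gradient_eq_zero_of_mem_segment hgrad hmin (hy xbar) ht
  exact sub_eq_zero.1 (hBD A hA (hAd.trans (map_zero A).symm))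
end

section
/- Consider the iteration x^{k+1} = xᵏ - (Vₖ + αₖI)^{-1} gᵃ(xᵏ, εₖ) converging to x̄ with g(x̄) = 0, where: ‖gᵃ(xᵏ,εₖ) - g(xᵏ)‖ = o(‖xᵏ - x̄‖); there exist V̄ₖ with ‖Vₖ - V̄ₖ‖ = o(1) and ‖g(xᵏ) - g(x̄) - V̄ₖ(xᵏ - x̄)‖ = o(‖xᵏ - x̄‖); αₖ → 0; and ‖(Vₖ + αₖI)^{-1}‖ = O(1). Then ‖x^{k+1} - x̄‖ = o(‖xᵏ - x̄‖), i.e. the sequence converges Q-superlinearly. -/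
/-! Writing `dₖ = xᵏ - x̄` and `Mₖ = Vₖ + αₖ I`, the step gives `dₖ₊₁ = Mₖ⁻¹ (Mₖ dₖ - gᵃ(xᵏ))`, and
since `g(x̄) = 0` the residual `Mₖ dₖ - gᵃ(xᵏ)` splits as
`(Vₖ - V̄ₖ) dₖ + αₖ dₖ - (g(xᵏ) - g(x̄) - V̄ₖ dₖ) - (gᵃ(xᵏ) - g(xᵏ))`.
Each of the four terms is `o(‖dₖ‖)`, and the uniform bound on `‖Mₖ⁻¹‖` preserves this. -/

open Set Filter Topology RealInnerProductSpace

open Asymptotics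

section RegularizedNewton

variable {ι 𝕜 E F : Type*} [NontriviallyNormedField 𝕜]
  [NormedAddCommGroup E] [NormedSpace 𝕜 E] [NormedAddCommGroup F] [NormedSpace 𝕜 F]
  {l : Filter ι}

theorem isBigO_apply_opNorm_mul (A : ι → E →L[𝕜] F) (u : ι → E) :
    (fun k => A k (u k)) =O[l] (fun k => ‖A k‖ * ‖u k‖) :=
  IsBigO.of_bound 1 <| Eventually.of_forall fun k => by
    simpa [abs_mul] using (A k).le_opNorm (u k)

theorem isBigO_apply_of_norm_le {A : ι → E →L[𝕜] F} {C : ℝ} (hA : ∀ k, ‖A k‖ ≤ C)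
    (u : ι → E) : (fun k => A k (u k)) =O[l] u :=
  IsBigO.of_bound C <| Eventually.of_forall fun k =>
    ((A k).le_opNorm _).trans (mul_le_mul_of_nonneg_right (hA k) (norm_nonneg _))

theorem isLittleO_apply_of_tendsto_opNorm {A : ι → E →L[𝕜] F}
    (hA : Tendsto (fun k => ‖A k‖) l (𝓝 0)) (u : ι → E) :
    (fun k => A k (u k)) =o[l] u := by
  have hsmall : (fun k => ‖A k‖ * ‖u k‖) =o[l] (fun k => (1 : ℝ) * ‖u k‖) :=
    ((isLittleO_one_iff ℝ).2 hA).mul_isBigO (isBigO_refl _ _)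
  simpa using (isBigO_apply_opNorm_mul A u).trans_isLittleO hsmall

theorem isLittleO_smul_of_tendsto_zero {a : ι → 𝕜} (ha : Tendsto a l (𝓝 0)) (u : ι → E) :
    (fun k => a k • u k) =o[l] u := by
  simpa using ((isLittleO_one_iff 𝕜).2 ha).smul_isBigO (isBigO_refl u l)

theorem regularizedNewton_error_eq {g : E → E} {V Vbar W : E →L[𝕜] E} {a : 𝕜} {x x' xbar ga : E}
    (hW : W.comp (V + a • ContinuousLinearMap.id 𝕜 E) = ContinuousLinearMap.id 𝕜 E)
    (hgx : g xbar = 0) (hstep : x' = x - W ga) :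
    x' - xbar = W ((V - Vbar) (x - xbar) + a • (x - xbar)
      - (g x - g xbar - Vbar (x - xbar)) - (ga - g x)) := by
  have hinv : W ((V + a • ContinuousLinearMap.id 𝕜 E) (x - xbar)) = x - xbar := by
    rw [← ContinuousLinearMap.comp_apply, hW, ContinuousLinearMap.id_apply]
  have hres : (V - Vbar) (x - xbar) + a • (x - xbar) - (g x - g xbar - Vbar (x - xbar))
      - (ga - g x) = (V + a • ContinuousLinearMap.id 𝕜 E) (x - xbar) - ga := by
    simp only [hgx, add_apply, sub_apply, smul_apply, ContinuousLinearMap.id_apply]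
    abel
  rw [hres, map_sub, hinv, hstep]
  abel

end RegularizedNewton

theorem superlinear_convergence_general (n : ℕ)
    (g : EuclideanSpace ℝ (Fin n) → EuclideanSpace ℝ (Fin n))
    (xbar : EuclideanSpace ℝ (Fin n)) (hgx : g xbar = 0)
    (x : ℕ → EuclideanSpace ℝ (Fin n))
    (V : ℕ → EuclideanSpace ℝ (Fin n) →L[ℝ] EuclideanSpace ℝ (Fin n))
    (α : ℕ → ℝ) (hα : Tendsto α atTop (𝓝 0))
    -- `W k = (Vₖ + αₖ I)⁻¹`
    (W : ℕ → EuclideanSpace ℝ (Fin n) →L[ℝ] EuclideanSpace ℝ (Fin n))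
    (hWl : ∀ k, (W k).comp (V k + α k • ContinuousLinearMap.id ℝ (EuclideanSpace ℝ (Fin n)))
      = ContinuousLinearMap.id ℝ (EuclideanSpace ℝ (Fin n)))
    (hWbdd : ∃ C : ℝ, ∀ k, ‖W k‖ ≤ C)
    (ga : ℕ → EuclideanSpace ℝ (Fin n))
    (hga : (fun k => ga k - g (x k)) =o[atTop] (fun k => x k - xbar))
    (Vbar : ℕ → EuclideanSpace ℝ (Fin n) →L[ℝ] EuclideanSpace ℝ (Fin n))
    (hVbar : Tendsto (fun k => ‖V k - Vbar k‖) atTop (𝓝 0))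
    (hVbarTaylor : (fun k => g (x k) - g xbar - Vbar k (x k - xbar))
      =o[atTop] (fun k => x k - xbar))
    (hiter : ∀ k, x (k + 1) = x k - W k (ga k)) :
    (fun k => x (k + 1) - xbar) =o[atTop] (fun k => x k - xbar) := by
  obtain ⟨C, hC⟩ := hWbdd
  have herror : (fun k => x (k + 1) - xbar) = fun k => W k ((V k - Vbar k) (x k - xbar)
      + α k • (x k - xbar) - (g (x k) - g xbar - Vbar k (x k - xbar)) - (ga k - g (x k))) :=
    funext fun k => regularizedNewton_error_eq (hWl k) hgx (hiter k)
  have hresidual := (((isLittleO_apply_of_tendsto_opNorm hVbar _).add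
    (isLittleO_smul_of_tendsto_zero hα _)).sub hVbarTaylor).sub hga
  rw [herror]
  exact (isBigO_apply_of_norm_le hC _).trans_isLittleO hresidual

/-- Q-superlinear convergence of the approximate Newton iteration
`x^{k+1} = xᵏ - (Vₖ + αₖ I)⁻¹ gᵃ(xᵏ, εₖ)`. -/
theorem superlinear_convergence (n : ℕ)
    (g : EuclideanSpace ℝ (Fin n) → EuclideanSpace ℝ (Fin n))
    (K : NNReal) (hgLip : LipschitzWith K g)
    (xbar : EuclideanSpace ℝ (Fin n)) (hgx : g xbar = 0)
    (x : ℕ → EuclideanSpace ℝ (Fin n))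
    (hx : Tendsto x atTop (𝓝 xbar))
    (V : ℕ → EuclideanSpace ℝ (Fin n) →L[ℝ] EuclideanSpace ℝ (Fin n))
    (hVsymm : ∀ k d e, ⟪V k d, e⟫ = ⟪d, V k e⟫)
    (hVpsd : ∀ k d, (0:ℝ) ≤ ⟪d, V k d⟫)
    (α : ℕ → ℝ) (hαpos : ∀ k, 0 < α k) (hα : Tendsto α atTop (𝓝 0))
    -- `W k = (Vₖ + αₖ I)⁻¹`
    (W : ℕ → EuclideanSpace ℝ (Fin n) →L[ℝ] EuclideanSpace ℝ (Fin n))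
    (hWl : ∀ k, (W k).comp (V k + α k • ContinuousLinearMap.id ℝ (EuclideanSpace ℝ (Fin n)))
      = ContinuousLinearMap.id ℝ (EuclideanSpace ℝ (Fin n)))
    (hWr : ∀ k, (V k + α k • ContinuousLinearMap.id ℝ (EuclideanSpace ℝ (Fin n))).comp (W k)
      = ContinuousLinearMap.id ℝ (EuclideanSpace ℝ (Fin n)))
    (hWbdd : ∃ C : ℝ, ∀ k, ‖W k‖ ≤ C)
    (ga : ℕ → EuclideanSpace ℝ (Fin n))
    (hga : (fun k => ga k - g (x k)) =o[atTop] (fun k => x k - xbar))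
    (Vbar : ℕ → EuclideanSpace ℝ (Fin n) →L[ℝ] EuclideanSpace ℝ (Fin n))
    (hVbar : Tendsto (fun k => ‖V k - Vbar k‖) atTop (𝓝 0))
    (hVbarTaylor : (fun k => g (x k) - g xbar - Vbar k (x k - xbar))
      =o[atTop] (fun k => x k - xbar))
    (hiter : ∀ k, x (k + 1) = x k - W k (ga k)) :
    (fun k => x (k + 1) - xbar) =o[atTop] (fun k => x k - xbar) :=
  superlinear_convergence_general n g xbar hgx x V α hα W hWl hWbdd ga hga Vbar hVbar hVbarTaylor
    hiter
end
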